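/- Let A be commutative. If for each s ∈ G \ {e} there exists a ∈ A such that σ_s(a) − a is not a zero-divisor in A, then Ã is maximal commutative in A ⋊_α^σ G. -/
import Mathlib


/-- A `G`-crossed system `{A, G, σ, α}`: a unital ring `A`, a group `G`,
`σ : G → Aut(A)` and a `σ`-cocycle `α : G × G → U(A)` satisfying the
crossed-system axioms (i)-(iii). -/
structure CrossedSystem (A : Type*) [Ring A] (G : Type*) [Group G] where
  σ : G → RingAut A
  α : G → G → Aˣ
  compat : ∀ x y : G, ∀ a : A,
    σ x (σ y a) = (α x y : A) * σ (x * y) a * ((α x y)⁻¹ : Aˣ)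
  cocycle : ∀ x y z : G,
    (α x y : A) * (α (x * y) z : A) = σ x (α y z : A) * (α x (y * z) : A)
  unit_right : ∀ x : G, α x 1 = 1
  unit_left : ∀ x : G, α 1 x = 1

variable {A : Type*} [CommRing A] {G : Type*} [Group G]

/-- Multiplication of the crossed product `A ⋊_α^σ G`, realized on the free
left `A`-module `G →₀ A`: `(a x̄)(b ȳ) = a σ_x(b) α(x,y) (x*y)‾`. -/
noncomputable def cmul (C : CrossedSystem A G) (f g : G →₀ A) : G →₀ A :=
  f.sum fun s a => g.sum fun t b =>
    Finsupp.single (s * t) (a * C.σ s b * (C.α s t : A))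

/-- The element `1_A ē` of the crossed product. -/
noncomputable def cone : G →₀ A := Finsupp.single 1 1

/-- The canonical embedding `ι : A → A ⋊_α^σ G`, `a ↦ a ē`; its range is `Ã`. -/
noncomputable def cemb (a : A) : G →₀ A := Finsupp.single 1 a

/-- The commutant `Comm(Ã)` of the embedded base ring in the crossed product. -/
noncomputable def cCommutant (C : CrossedSystem A G) : Set (G →₀ A) :=
  {x | ∀ a : A, cmul C (cemb a) x = cmul C x (cemb a)}

/-- `I` is a (non-unital) two-sided ideal of the crossed product `A ⋊_α^σ G`. -/
def cIsIdeal (C : CrossedSystem A G) (I : Set (G →₀ A)) : Prop :=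
  0 ∈ I ∧ (∀ x ∈ I, ∀ y ∈ I, x + y ∈ I) ∧ (∀ x ∈ I, -x ∈ I) ∧
    (∀ x ∈ I, ∀ y : G →₀ A, cmul C y x ∈ I ∧ cmul C x y ∈ I)

lemma sigma_one_apply (C : CrossedSystem A G) (a : A) : C.σ 1 a = a := by
  have h := C.compat 1 1 a
  rw [C.unit_left 1] at h
  simp only [Units.val_one, one_mul, mul_one, inv_one] at h
  exact (C.σ 1).injective h

lemma cmul_cemb_left (C : CrossedSystem A G) (a : A) (g : G →₀ A) :
    cmul C (cemb a) g = g.sum fun t b => Finsupp.single t (a * b) := by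
  unfold cmul cemb
  rw [Finsupp.sum_single_index]
  · refine Finsupp.sum_congr fun t _ => ?_
    rw [C.unit_left, sigma_one_apply]
    simp
  · simp

lemma cmul_cemb_right (C : CrossedSystem A G) (a : A) (g : G →₀ A) :
    cmul C g (cemb a) = g.sum fun s b => Finsupp.single s (b * C.σ s a) := by
  unfold cmul cemb
  refine Finsupp.sum_congr fun s _ => ?_
  rw [Finsupp.sum_single_index]
  · rw [C.unit_right]
    simp
  · simp

theorem stmt_12 (C : CrossedSystem A G)
    (h : ∀ s : G, s ≠ 1 → ∃ a : A, ∀ c : A, (C.σ s a - a) * c = 0 → c = 0) :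
    cCommutant C = Set.range (cemb (A := A) (G := G)) := by
  ext x
  constructor
  · intro hx
    have key : ∀ a : A, ∀ t : G, a * x t = x t * C.σ t a := by
      intro a t
      have hk := hx a
      rw [cmul_cemb_left, cmul_cemb_right] at hk
      have hk2 := congrFun (congrArg (⇑) hk) t
      classical
      simp only [Finsupp.sum_apply, Finsupp.single_apply, Finsupp.sum_ite_eq'] at hk2
      by_cases hm : t ∈ x.support
      · rwa [if_pos hm, if_pos hm] at hk2
      · have h0 : x t = 0 := Finsupp.notMem_support_iff.mp hm
        simp [h0]
    refine ⟨x 1, ?_⟩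
    ext t
    rcases eq_or_ne t 1 with rfl | ht
    · simp [cemb]
    · obtain ⟨a, ha⟩ := h t ht
      have h0 : (C.σ t a - a) * x t = 0 := by
        linear_combination -(key a t)
      rw [ha _ h0]
      simp [cemb, Finsupp.single_apply, Ne.symm ht]
  · rintro ⟨b, rfl⟩
    intro a
    rw [cmul_cemb_left, cmul_cemb_right]
    unfold cemb
    rw [Finsupp.sum_single_index (by simp), Finsupp.sum_single_index (by simp),
      sigma_one_apply, mul_comm]
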